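/- Let p: ℝ → ℝ be smooth and 2π-periodic, γ(α) := p'(α)e_α − p(α)Je_α, and L(α₁,α₂) := ω(γ(α₁),γ(α₂)). Then ∫∫_{[0,2π]²} [L₁₁(α₁,α₂) + L₂₂(α₁,α₂)] · L₁₂(α₁,α₂) dα₁ dα₂ = −2 A(D) ∫₀^{2π} (p''(α) + p(α))² dα, where A(D) := ½ ∫₀^{2π} (p(α) + p''(α)) p(α) dα. -/

import Mathlib

open Real MeasureTheory intervalIntegral

/-- The standard area form on ℝ². -/
noncomputable def om (u v : ℝ × ℝ) : ℝ := u.1 * v.2 - v.1 * u.2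

/-- The unit vector forming angle α with (0,1). -/
noncomputable def eVec (α : ℝ) : ℝ × ℝ := (-Real.sin α, Real.cos α)

/-- Rotation by π/2 in the positive sense. -/
def Jrot (v : ℝ × ℝ) : ℝ × ℝ := (-v.2, v.1)

/-- L₁₁(t₁,t₂) = ω(γ''(t₁), γ(t₂)). -/
noncomputable def L11 (γ : ℝ → ℝ × ℝ) (t₁ t₂ : ℝ) : ℝ := om (deriv (deriv γ) t₁) (γ t₂)

/-- L₂₂(t₁,t₂) = ω(γ(t₁), γ''(t₂)). -/
noncomputable def L22 (γ : ℝ → ℝ × ℝ) (t₁ t₂ : ℝ) : ℝ := om (γ t₁) (deriv (deriv γ) t₂)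

/-- L₁₂(t₁,t₂) = ω(γ'(t₁), γ'(t₂)). -/
noncomputable def L12 (γ : ℝ → ℝ × ℝ) (t₁ t₂ : ℝ) : ℝ := om (deriv γ t₁) (deriv γ t₂)

/-- The 12 basic single-variable functions appearing after separating variables. -/
noncomputable def gv (p : ℝ → ℝ) : ℕ → ℝ → ℝ
  | 0 => fun x => (deriv (deriv p) x + p x) * deriv p x * Real.sin x ^ 2
  | 1 => fun x => (deriv (deriv p) x + p x) * deriv p x * (Real.sin x * Real.cos x)
  | 2 => fun x => (deriv (deriv p) x + p x) * deriv p x * Real.cos x ^ 2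
  | 3 => fun x => (deriv (deriv p) x + p x) * p x * Real.sin x ^ 2
  | 4 => fun x => (deriv (deriv p) x + p x) * p x * (Real.sin x * Real.cos x)
  | 5 => fun x => (deriv (deriv p) x + p x) * p x * Real.cos x ^ 2
  | 6 => fun x => (deriv (deriv p) x + p x) * (deriv (deriv (deriv p)) x + deriv p x) * Real.sin x ^ 2
  | 7 => fun x => (deriv (deriv p) x + p x) * (deriv (deriv (deriv p)) x + deriv p x) * (Real.sin x * Real.cos x)
  | 8 => fun x => (deriv (deriv p) x + p x) * (deriv (deriv (deriv p)) x + deriv p x) * Real.cos x ^ 2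
  | 9 => fun x => (deriv (deriv p) x + p x) * (deriv (deriv p) x + p x) * Real.sin x ^ 2
  | 10 => fun x => (deriv (deriv p) x + p x) * (deriv (deriv p) x + p x) * (Real.sin x * Real.cos x)
  | 11 => fun x => (deriv (deriv p) x + p x) * (deriv (deriv p) x + p x) * Real.cos x ^ 2
  | _ => fun _ => 0

/-- The coefficient matrix, as a linear map on 12-vectors. -/
noncomputable def dve (v : ℕ → ℝ) : ℕ → ℝ
  | 0 => v 8 - v 10
  | 1 => -2 * v 7 - v 11 + v 9
  | 2 => v 6 + v 10
  | 3 => -(v 7) - v 11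
  | 4 => -(v 8) + v 6 + 2 * v 10
  | 5 => v 7 - v 9
  | 6 => v 2 + v 4
  | 7 => -2 * v 1 + v 5 - v 3
  | 8 => v 0 - v 4
  | 9 => v 1 - v 5
  | 10 => v 2 - v 0 + 2 * v 4
  | 11 => -(v 1) - v 3
  | _ => 0

lemma dve_swap (x y : ℕ → ℝ) :
    ∑ i ∈ Finset.range 12, dve x i * y i = ∑ i ∈ Finset.range 12, dve y i * x i := by
  simp only [Finset.sum_range_succ, Finset.sum_range_zero, dve]
  ring

lemma integral_sum12 (lo hi : ℝ) (c : ℕ → ℝ) (g : ℕ → ℝ → ℝ)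
    (hg : ∀ i, Continuous (g i)) :
    (∫ x in lo..hi, ∑ i ∈ Finset.range 12, c i * g i x)
      = ∑ i ∈ Finset.range 12, c i * ∫ x in lo..hi, g i x := by
  rw [intervalIntegral.integral_finset_sum
    (fun i _ => ((show Continuous (fun x => c i * g i x) from continuous_const.mul (hg i)).intervalIntegrable lo hi))]
  simp [intervalIntegral.integral_const_mul]

lemma periodic_deriv_aux (f : ℝ → ℝ) (hf : Differentiable ℝ f)
    (h : ∀ x, f (x + 2 * π) = f x) : ∀ x, deriv f (x + 2 * π) = deriv f x := by
  intro x
  have h1 : HasDerivAt (fun y => f (y + 2 * π)) (deriv f (x + 2 * π) * 1) x :=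
    ((hf (x + 2 * π)).hasDerivAt).comp x ((hasDerivAt_id x).add_const _)
  have h2 : (fun y => f (y + 2 * π)) = f := funext h
  rw [h2] at h1
  have := h1.deriv
  simpa using this.symm

/-- In the support-function parametrization,
∫∫ [L₁₁+L₂₂]·L₁₂ = -2 A(D) ∫ (p''+p)². -/
theorem integral_L11_add_L22_mul_L12_support_function
    (p : ℝ → ℝ) (hp : ContDiff ℝ (⊤ : ℕ∞) p) (hper : ∀ α, p (α + 2 * π) = p α)
    (γ : ℝ → ℝ × ℝ)
    (hγ : ∀ α, γ α = deriv p α • eVec α - p α • Jrot (eVec α)) :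
    (∫ α₁ in (0:ℝ)..(2 * π), ∫ α₂ in (0:ℝ)..(2 * π),
        (L11 γ α₁ α₂ + L22 γ α₁ α₂) * L12 γ α₁ α₂)
      = -2 * ((1 / 2) * ∫ α in (0:ℝ)..(2 * π), (p α + deriv (deriv p) α) * p α)
          * ∫ α in (0:ℝ)..(2 * π), (deriv (deriv p) α + p α) ^ 2 := by
  -- smoothness facts
  have hp' : ContDiff ℝ ((⊤:ℕ∞) : WithTop ℕ∞) p := hp.of_le (by simp)
  have h1 : ContDiff ℝ ((⊤:ℕ∞) : WithTop ℕ∞) (deriv p) := (contDiff_infty_iff_deriv.mp hp').2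
  have h2 : ContDiff ℝ ((⊤:ℕ∞) : WithTop ℕ∞) (deriv (deriv p)) := (contDiff_infty_iff_deriv.mp h1).2
  have h3 : ContDiff ℝ ((⊤:ℕ∞) : WithTop ℕ∞) (deriv (deriv (deriv p))) := (contDiff_infty_iff_deriv.mp h2).2
  have hc0 : Continuous p := hp.continuous
  have hc1 : Continuous (deriv p) := h1.continuous
  have hc2 : Continuous (deriv (deriv p)) := h2.continuous
  have hc3 : Continuous (deriv (deriv (deriv p))) := h3.continuous
  have hd0 : ∀ x : ℝ, HasDerivAt p (deriv p x) x :=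
    fun x => ((contDiff_infty_iff_deriv.mp hp').1 x).hasDerivAt
  have hd1 : ∀ x : ℝ, HasDerivAt (deriv p) (deriv (deriv p) x) x :=
    fun x => ((contDiff_infty_iff_deriv.mp h1).1 x).hasDerivAt
  have hd2 : ∀ x : ℝ, HasDerivAt (deriv (deriv p)) (deriv (deriv (deriv p)) x) x :=
    fun x => ((contDiff_infty_iff_deriv.mp h2).1 x).hasDerivAt
  -- explicit formula for γ
  have hγe : ∀ a, γ a = (-(deriv p a * Real.sin a) + p a * Real.cos a,
      deriv p a * Real.cos a + p a * Real.sin a) := by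
    intro a
    rw [hγ]
    simp only [eVec, Jrot, Prod.smul_mk, smul_eq_mul, Prod.mk_sub_mk, Prod.mk.injEq]
    constructor <;> ring
  -- first derivative of γ
  have hdγ : ∀ a, deriv γ a = (-((deriv (deriv p) a + p a) * Real.sin a),
      (deriv (deriv p) a + p a) * Real.cos a) := by
    intro a
    have hγfun : γ = fun a => (-(deriv p a * Real.sin a) + p a * Real.cos a,
        deriv p a * Real.cos a + p a * Real.sin a) := funext hγe
    have c1 : HasDerivAt (fun x => -(deriv p x * Real.sin x) + p x * Real.cos x)
        (-((deriv (deriv p) a + p a) * Real.sin a)) a := by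
      have := (((hd1 a).mul (Real.hasDerivAt_sin a)).neg).add
        ((hd0 a).mul (Real.hasDerivAt_cos a))
      exact this.congr_deriv (by ring)
    have c2 : HasDerivAt (fun x => deriv p x * Real.cos x + p x * Real.sin x)
        ((deriv (deriv p) a + p a) * Real.cos a) a := by
      have := ((hd1 a).mul (Real.hasDerivAt_cos a)).add
        ((hd0 a).mul (Real.hasDerivAt_sin a))
      exact this.congr_deriv (by ring)
    rw [hγfun]
    exact (c1.prodMk c2).deriv
  -- second derivative of γ
  have hddγ : ∀ a, deriv (deriv γ) a =
      (-((deriv (deriv (deriv p)) a + deriv p a) * Real.sin a)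
          - (deriv (deriv p) a + p a) * Real.cos a,
        (deriv (deriv (deriv p)) a + deriv p a) * Real.cos a
          - (deriv (deriv p) a + p a) * Real.sin a) := by
    intro a
    have hdγfun : deriv γ = fun a => (-((deriv (deriv p) a + p a) * Real.sin a),
        (deriv (deriv p) a + p a) * Real.cos a) := funext hdγ
    have hu : ∀ x : ℝ, HasDerivAt (fun y => deriv (deriv p) y + p y)
        (deriv (deriv (deriv p)) x + deriv p x) x := fun x => (hd2 x).add (hd0 x)
    have c1 : HasDerivAt (fun x => -((deriv (deriv p) x + p x) * Real.sin x))
        (-((deriv (deriv (deriv p)) a + deriv p a) * Real.sin a)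
          - (deriv (deriv p) a + p a) * Real.cos a) a := by
      have := ((hu a).mul (Real.hasDerivAt_sin a)).neg
      exact this.congr_deriv (by ring)
    have c2 : HasDerivAt (fun x => (deriv (deriv p) x + p x) * Real.cos x)
        ((deriv (deriv (deriv p)) a + deriv p a) * Real.cos a
          - (deriv (deriv p) a + p a) * Real.sin a) a := by
      have := (hu a).mul (Real.hasDerivAt_cos a)
      exact this.congr_deriv (by ring)
    rw [hdγfun]
    exact (c1.prodMk c2).deriv
  -- continuity of the basis functions
  have hgcont : ∀ i, Continuous (gv p i) := by
    intro i
    match i with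
    | 0 => exact ((hc2.add hc0).mul hc1).mul (continuous_sin.pow 2)
    | 1 => exact ((hc2.add hc0).mul hc1).mul (continuous_sin.mul continuous_cos)
    | 2 => exact ((hc2.add hc0).mul hc1).mul (continuous_cos.pow 2)
    | 3 => exact ((hc2.add hc0).mul hc0).mul (continuous_sin.pow 2)
    | 4 => exact ((hc2.add hc0).mul hc0).mul (continuous_sin.mul continuous_cos)
    | 5 => exact ((hc2.add hc0).mul hc0).mul (continuous_cos.pow 2)
    | 6 => exact ((hc2.add hc0).mul (hc3.add hc1)).mul (continuous_sin.pow 2)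
    | 7 => exact ((hc2.add hc0).mul (hc3.add hc1)).mul (continuous_sin.mul continuous_cos)
    | 8 => exact ((hc2.add hc0).mul (hc3.add hc1)).mul (continuous_cos.pow 2)
    | 9 => exact ((hc2.add hc0).mul (hc2.add hc0)).mul (continuous_sin.pow 2)
    | 10 => exact ((hc2.add hc0).mul (hc2.add hc0)).mul (continuous_sin.mul continuous_cos)
    | 11 => exact ((hc2.add hc0).mul (hc2.add hc0)).mul (continuous_cos.pow 2)
    | (n+12) => exact continuous_const
  set J : ℕ → ℝ := fun i => ∫ x in (0:ℝ)..(2*π), gv p i x with hJ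
  -- separation of variables identity
  have hfact : ∀ a b, (L11 γ a b + L22 γ a b) * L12 γ a b
      = ∑ i ∈ Finset.range 12, dve (fun k => gv p k a) i * gv p i b := by
    intro a b
    simp only [L11, L22, L12, om, hγe, hdγ, hddγ, Finset.sum_range_succ,
      Finset.sum_range_zero, dve, gv]
    ring
  -- inner integral
  have hinner : ∀ a, (∫ b in (0:ℝ)..(2*π), (L11 γ a b + L22 γ a b) * L12 γ a b)
      = ∑ i ∈ Finset.range 12, dve J i * gv p i a := by
    intro a
    rw [intervalIntegral.integral_congr (g := fun b =>
      ∑ i ∈ Finset.range 12, dve (fun k => gv p k a) i * gv p i b) (fun b _ => hfact a b)]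
    rw [integral_sum12 _ _ _ _ hgcont]
    rw [show (∑ i ∈ Finset.range 12, dve (fun k => gv p k a) i * ∫ x in (0:ℝ)..(2*π), gv p i x)
        = ∑ i ∈ Finset.range 12, dve (fun k => gv p k a) i * J i from rfl]
    exact dve_swap _ _
  -- outer integral
  have houter : (∫ α₁ in (0:ℝ)..(2 * π), ∫ α₂ in (0:ℝ)..(2 * π),
      (L11 γ α₁ α₂ + L22 γ α₁ α₂) * L12 γ α₁ α₂)
      = ∑ i ∈ Finset.range 12, dve J i * J i := by
    rw [intervalIntegral.integral_congr (g := fun a =>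
      ∑ i ∈ Finset.range 12, dve J i * gv p i a) (fun a _ => hinner a)]
    exact integral_sum12 _ _ _ _ hgcont
  -- periodicity facts
  have hp0 : p (2 * π) = p 0 := by simpa using hper 0
  have hp2 : deriv (deriv p) (2 * π) = deriv (deriv p) 0 := by
    have e1 := periodic_deriv_aux p (contDiff_infty_iff_deriv.mp hp').1 hper
    have e2 := periodic_deriv_aux (deriv p) (contDiff_infty_iff_deriv.mp h1).1 e1
    simpa using e2 0
  -- the three integration-by-parts relations
  have intg : ∀ i, IntervalIntegrable (gv p i) volume 0 (2*π) :=
    fun i => (hgcont i).intervalIntegrable _ _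
  have hu : ∀ x : ℝ, HasDerivAt (fun y => deriv (deriv p) y + p y)
      (deriv (deriv (deriv p)) x + deriv p x) x := fun x => (hd2 x).add (hd0 x)
  have R1 : J 6 + J 10 = 0 := by
    have key : (∫ x in (0:ℝ)..(2*π), (gv p 6 x + gv p 10 x))
        = ((deriv (deriv p) (2*π) + p (2*π))^2 * Real.sin (2*π) ^ 2 / 2)
          - ((deriv (deriv p) 0 + p 0)^2 * Real.sin 0 ^ 2 / 2) := by
      apply intervalIntegral.integral_eq_sub_of_hasDerivAt
        (f := fun x => (deriv (deriv p) x + p x)^2 * Real.sin x ^ 2 / 2)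
      · intro x _
        have := (((hu x).pow 2).mul ((Real.hasDerivAt_sin x).pow 2)).div_const 2
        exact this.congr_deriv (by simp only [gv, Pi.pow_apply, Pi.mul_apply]; ring)
      · exact ((hgcont 6).add (hgcont 10)).intervalIntegrable _ _
    rw [intervalIntegral.integral_add (intg 6) (intg 10)] at key
    simp only [Real.sin_two_pi, Real.sin_zero] at key
    simpa [hJ] using key
  have R2 : J 8 - J 10 = 0 := by
    have key : (∫ x in (0:ℝ)..(2*π), (gv p 8 x - gv p 10 x))
        = ((deriv (deriv p) (2*π) + p (2*π))^2 * Real.cos (2*π) ^ 2 / 2)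
          - ((deriv (deriv p) 0 + p 0)^2 * Real.cos 0 ^ 2 / 2) := by
      apply intervalIntegral.integral_eq_sub_of_hasDerivAt
        (f := fun x => (deriv (deriv p) x + p x)^2 * Real.cos x ^ 2 / 2)
      · intro x _
        have := (((hu x).pow 2).mul ((Real.hasDerivAt_cos x).pow 2)).div_const 2
        exact this.congr_deriv (by simp only [gv, Pi.pow_apply, Pi.mul_apply]; ring)
      · exact ((hgcont 8).sub (hgcont 10)).intervalIntegrable _ _
    rw [intervalIntegral.integral_sub (intg 8) (intg 10)] at key
    rw [hp0, hp2] at key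
    simp only [Real.cos_two_pi, Real.cos_zero] at key
    simpa [hJ] using key
  have R3 : 2 * J 7 + J 11 - J 9 = 0 := by
    have key : (∫ x in (0:ℝ)..(2*π), (2 * gv p 7 x + (gv p 11 x - gv p 9 x)))
        = ((deriv (deriv p) (2*π) + p (2*π))^2 * (Real.sin (2*π) * Real.cos (2*π)))
          - ((deriv (deriv p) 0 + p 0)^2 * (Real.sin 0 * Real.cos 0)) := by
      apply intervalIntegral.integral_eq_sub_of_hasDerivAt
        (f := fun x => (deriv (deriv p) x + p x)^2 * (Real.sin x * Real.cos x))
      · intro x _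
        have := ((hu x).pow 2).mul ((Real.hasDerivAt_sin x).mul (Real.hasDerivAt_cos x))
        exact this.congr_deriv (by simp only [gv, Pi.pow_apply, Pi.mul_apply]; ring)
      · exact ((continuous_const.mul (hgcont 7)).add
          ((hgcont 11).sub (hgcont 9))).intervalIntegrable _ _
    rw [intervalIntegral.integral_add ((show Continuous (fun x => 2 * gv p 7 x) from continuous_const.mul (hgcont 7)).intervalIntegrable _ _)
      ((intg 11).sub (intg 9)), intervalIntegral.integral_sub (intg 11) (intg 9),
      intervalIntegral.integral_const_mul] at key
    simp only [Real.sin_two_pi, Real.sin_zero] at key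
    have : 2 * J 7 + (J 11 - J 9) = 0 := by simpa [hJ] using key
    linarith
  -- rewrite the two right-hand side integrals
  have hA : (∫ α in (0:ℝ)..(2 * π), (p α + deriv (deriv p) α) * p α) = J 3 + J 5 := by
    rw [intervalIntegral.integral_congr (g := fun a => gv p 3 a + gv p 5 a)
      (fun a _ => by
        simp only [gv]
        linear_combination (-((deriv (deriv p) a + p a) * p a)) * Real.sin_sq_add_cos_sq a)]
    rw [intervalIntegral.integral_add (intg 3) (intg 5)]
  have hI : (∫ α in (0:ℝ)..(2 * π), (deriv (deriv p) α + p α) ^ 2) = J 9 + J 11 := by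
    rw [intervalIntegral.integral_congr (g := fun a => gv p 9 a + gv p 11 a)
      (fun a _ => by
        simp only [gv]
        linear_combination (-((deriv (deriv p) a + p a) * (deriv (deriv p) a + p a))) * Real.sin_sq_add_cos_sq a)]
    rw [intervalIntegral.integral_add (intg 9) (intg 11)]
  rw [houter, hA, hI]
  simp only [Finset.sum_range_succ, Finset.sum_range_zero, dve]
  linear_combination (2 * J 2 + 2 * J 4) * R1 + (2 * J 0 - 2 * J 4) * R2
    + (-2 * J 1 + J 5 - J 3) * R3
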